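/- Let z, z′ ∈ ℂ be such that (z+k)(z′+k) is real and positive for every k ∈ ℤ (hence z z′ > 0, z + z′ ∈ ℝ, Γ(z+1)Γ(z′+1) > 0, and (z+1)_m (z′+1)_m > 0 for every nonnegative integer m). For ξ ∈ (0,1) and n ∈ ℤ′₊ set h_I^d(n; ξ) = (z z′)^{1/4} · ξ^{n/2} · (1−ξ)^{(z+z′)/2} · √((z+1)_{n−1/2} (z′+1)_{n−1/2}) / Γ(n+1/2), and for x > 0 set h_I^c(x) = (z z′)^{1/4} · x^{(z+z′)/2} · e^{−x/2} / √(Γ(z+1)Γ(z′+1)), where all fourth and square roots are the positive real roots of the indicated positive real numbers. Then for every x > 0 and all sequences ξ_k ∈ (0,1) with ξ_k → 1 and n_k ∈ ℤ′₊ with (1−ξ_k) n_k → x, one has h_I^d(n_k; ξ_k) → h_I^c(x). -/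

import Mathlib

noncomputable section

open scoped Topology

/-- The discrete function `h_I^d` attached to the z-measures: for the positive half-integer
`n = a + 1/2` (with `a : ℕ`) and `ξ ∈ (0,1)`,
`h_I^d(n; ξ) = (zz')^{1/4} ξ^{n/2} (1−ξ)^{(z+z')/2} √((z+1)_{n−1/2} (z'+1)_{n−1/2}) / Γ(n+1/2)`,
where the fourth and square roots are the positive real roots of the indicated positive
real numbers, and `(z+1)_a (z'+1)_a = ∏_{i<a} (z+1+i)(z'+1+i)`. -/
def hId (z z' : ℂ) (a : ℕ) (ξ : ℝ) : ℝ :=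
  ((z * z').re) ^ ((1 : ℝ)/4) * ξ ^ ((((a : ℝ) + 1/2)) / 2) *
    (1 - ξ) ^ ((z + z').re / 2) *
    Real.sqrt ((∏ i ∈ Finset.range a, ((z + 1 + (i : ℂ)) * (z' + 1 + (i : ℂ)))).re) /
    Real.Gamma (((a : ℝ) + 1/2) + 1/2)

/-- The continuous function `h_I^c(x) = (zz')^{1/4} x^{(z+z')/2} e^{−x/2} / √(Γ(z+1)Γ(z'+1))`
for `x > 0`. -/
def hIc (z z' : ℂ) (x : ℝ) : ℝ :=
  ((z * z').re) ^ ((1 : ℝ)/4) * x ^ ((z + z').re / 2) * Real.exp (-x/2) /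
    Real.sqrt ((Complex.Gamma (z + 1) * Complex.Gamma (z' + 1)).re)

/-!
The sum `s = z + z'` is real because `z + z' = (z + 1)(z' + 1) - zz' - 1`. Multiplying Euler's
limit formula `Γ(w) = lim n^w n! / (w (w + 1) ⋯ (w + n))` for `w = z` and `w = z'` gives
`Γ(z + 1) Γ(z' + 1) = lim n^s (n!)² / P_n` with `P_n = (z + 1)_n (z' + 1)_n`, a limit of
positive reals that is nonzero, hence positive. Since `Γ(n + 1) = n!`,
`h_I^d(n + 1/2; ξ) = (zz')^{1/4} ξ^{(n + 1/2)/2} ((1 - ξ) n)^{s/2} / √(n^s (n!)² / P_n)`,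
and along the given sequences the three varying factors tend to `e^{-x/2}`, `x^{s/2}` and
`√(Γ(z + 1) Γ(z' + 1))`; the first by squeezing `t log ξ` between `(1 - ξ⁻¹) t` and `(ξ - 1) t`.
-/

open Filter Finset Complex Topology
open scoped ComplexOrder Nat

namespace Complex

lemma mul_GammaSeq_mul_prod (w : ℂ) (n : ℕ) (hw : ∀ j : ℕ, w + j ≠ 0) :
    w * GammaSeq w n * ∏ i ∈ range n, (w + 1 + i) = (n : ℂ) ^ w * n ! := by
  have hshift : w * ∏ i ∈ range n, (w + 1 + i) = ∏ j ∈ range (n + 1), (w + j) := by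
    rw [prod_range_succ']
    push_cast
    simp only [add_assoc, add_comm (1 : ℂ), add_zero, mul_comm w]
  rw [mul_right_comm, hshift, GammaSeq, mul_div_cancel₀ _ (prod_ne_zero_iff.2 fun j _ => hw j)]

lemma tendsto_cpow_mul_factorial_sq_div_prod {z z' : ℂ}
    (hP : ∀ j : ℕ, (z + j) * (z' + j) ≠ 0) :
    Tendsto (fun n : ℕ => (n : ℂ) ^ (z + z') * (n ! : ℂ) ^ 2 /
        ∏ i ∈ range n, ((z + 1 + i) * (z' + 1 + i)))
      atTop (𝓝 (Gamma (z + 1) * Gamma (z' + 1))) := by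
  have hz j := left_ne_zero_of_mul (hP j)
  have hz' j := right_ne_zero_of_mul (hP j)
  have hlim := ((GammaSeq_tendsto_Gamma z).const_mul z).mul
    ((GammaSeq_tendsto_Gamma z').const_mul z')
  rw [← Gamma_add_one z (by simpa using hz 0), ← Gamma_add_one z' (by simpa using hz' 0)] at hlim
  refine hlim.congr' ?_
  filter_upwards [eventually_ne_atTop 0] with n hn
  have hprod : ∏ i ∈ range n, ((z + 1 + i) * (z' + 1 + i)) ≠ 0 :=
    prod_ne_zero_iff.2 fun i _ => by simpa [add_assoc, add_comm (1 : ℂ)] using hP (i + 1)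
  rw [eq_div_iff hprod, prod_mul_distrib, cpow_add _ _ (Nat.cast_ne_zero.2 hn)]
  calc _ = (z * GammaSeq z n * ∏ i ∈ range n, (z + 1 + i)) *
        (z' * GammaSeq z' n * ∏ i ∈ range n, (z' + 1 + i)) := by ring
    _ = _ := by rw [mul_GammaSeq_mul_prod z n hz, mul_GammaSeq_mul_prod z' n hz']; ring

end Complex

lemma im_add_eq_zero_of_pos {z z' : ℂ} (h0 : 0 < z * z') (h1 : 0 < (z + 1) * (z' + 1)) :
    (z + z').im = 0 := by
  have him : ((z + 1) * (z' + 1) - z * z' - 1).im = 0 := by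
    simp [← (pos_iff.1 h0).2, ← (pos_iff.1 h1).2]
  rwa [show (z + 1) * (z' + 1) - z * z' - 1 = z + z' by ring] at him

lemma prod_add_one_mul_pos {z z' : ℂ} (hpos : ∀ k : ℤ, 0 < (z + k) * (z' + k)) (m : ℕ) :
    0 < ∏ i ∈ range m, ((z + 1 + i) * (z' + 1 + i)) :=
  prod_pos fun i _ => by simpa [add_assoc, add_comm (1 : ℂ)] using hpos (i + 1)

lemma cpow_mul_factorial_sq_div_prod_eq_ofReal {z z' : ℂ}
    (hpos : ∀ k : ℤ, 0 < (z + k) * (z' + k)) (n : ℕ) :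
    (n : ℂ) ^ (z + z') * (n ! : ℂ) ^ 2 / ∏ i ∈ range n, ((z + 1 + i) * (z' + 1 + i)) =
      (((n : ℝ) ^ (z + z').re * (n ! : ℝ) ^ 2 /
        (∏ i ∈ range n, ((z + 1 + i) * (z' + 1 + i))).re : ℝ) : ℂ) := by
  have hs : z + z' = ((z + z').re : ℂ) :=
    Complex.ext rfl (im_add_eq_zero_of_pos (by simpa using hpos 0) (by simpa using hpos 1))
  have hP : ∏ i ∈ range n, ((z + 1 + i) * (z' + 1 + i)) =
      ((∏ i ∈ range n, ((z + 1 + i) * (z' + 1 + i))).re : ℂ) :=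
    eq_re_of_ofReal_le (r := 0) (by rw [ofReal_zero]; exact (prod_add_one_mul_pos hpos n).le)
  conv_lhs => rw [hs, hP]
  push_cast [ofReal_cpow (Nat.cast_nonneg n)]
  rfl

lemma Gamma_mul_Gamma_pos {z z' : ℂ} (hpos : ∀ k : ℤ, 0 < (z + k) * (z' + k)) :
    0 < Gamma (z + 1) * Gamma (z' + 1) := by
  have hlim := tendsto_cpow_mul_factorial_sq_div_prod fun j => by exact_mod_cast (hpos j).ne'
  have hnonneg : 0 ≤ Gamma (z + 1) * Gamma (z' + 1) := by
    refine ge_of_tendsto' hlim fun n => ?_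
    rw [cpow_mul_factorial_sq_div_prod_eq_ofReal hpos, zero_le_real]
    have := (pos_iff.1 (prod_add_one_mul_pos hpos n)).1
    positivity
  refine hnonneg.lt_of_ne' (mul_ne_zero ?_ ?_) <;> refine Gamma_ne_zero fun m hm => ?_
  · exact left_ne_zero_of_mul (hpos (m + 1)).ne' (by push_cast; linear_combination hm)
  · exact right_ne_zero_of_mul (hpos (m + 1)).ne' (by push_cast; linear_combination hm)

lemma tendsto_rpow_mul_factorial_sq_div_prod_re {z z' : ℂ}
    (hpos : ∀ k : ℤ, 0 < (z + k) * (z' + k)) :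
    Tendsto (fun n : ℕ => (n : ℝ) ^ (z + z').re * (n ! : ℝ) ^ 2 /
        (∏ i ∈ range n, ((z + 1 + i) * (z' + 1 + i))).re)
      atTop (𝓝 (Gamma (z + 1) * Gamma (z' + 1)).re) := by
  have hlim := tendsto_cpow_mul_factorial_sq_div_prod fun j => by exact_mod_cast (hpos j).ne'
  simp_rw [cpow_mul_factorial_sq_div_prod_eq_ofReal hpos] at hlim
  exact ((continuous_re.tendsto _).comp hlim).congr fun n => ofReal_re _

lemma Real.tendsto_rpow_of_tendsto_one_sub_mul {ι : Type*} {l : Filter ι} {ξ t : ι → ℝ} {x : ℝ}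
    (hξ0 : ∀ k, 0 < ξ k) (ht : ∀ k, 0 ≤ t k) (hξ : Tendsto ξ l (𝓝 1))
    (hx : Tendsto (fun k => (1 - ξ k) * t k) l (𝓝 x)) :
    Tendsto (fun k => ξ k ^ t k) l (𝓝 (Real.exp (-x))) := by
  have hupper : Tendsto (fun k => (ξ k - 1) * t k) l (𝓝 (-x)) :=
    hx.neg.congr fun k => by ring
  have hlower : Tendsto (fun k => (1 - (ξ k)⁻¹) * t k) l (𝓝 (-x)) := by
    refine (by simpa using hupper.mul (hξ.inv₀ one_ne_zero) :
      Tendsto (fun k => (ξ k - 1) * t k * (ξ k)⁻¹) l (𝓝 (-x))).congr fun k => ?_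
    field_simp [(hξ0 k).ne']
  have hlog : Tendsto (fun k => Real.log (ξ k) * t k) l (𝓝 (-x)) :=
    tendsto_of_tendsto_of_tendsto_of_le_of_le hlower hupper
      (fun k => mul_le_mul_of_nonneg_right (Real.one_sub_inv_le_log_of_pos (hξ0 k)) (ht k))
      (fun k => mul_le_mul_of_nonneg_right (Real.log_le_sub_one_of_pos (hξ0 k)) (ht k))
  exact ((Real.continuous_exp.tendsto _).comp hlog).congr fun k => by
    simp [Real.rpow_def_of_pos (hξ0 k)]

lemma tendsto_atTop_of_tendsto_mul {ι : Type*} {l : Filter ι} {u v : ι → ℝ} {x : ℝ}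
    (hx : 0 < x) (hu : Tendsto u l (𝓝[>] 0)) (huv : Tendsto (fun k => u k * v k) l (𝓝 x)) :
    Tendsto v l atTop := by
  refine (huv.pos_mul_atTop hx hu.inv_tendsto_nhdsGT_zero).congr' ?_
  filter_upwards [hu self_mem_nhdsWithin] with k hk
  rw [Pi.inv_apply, mul_right_comm, mul_inv_cancel₀ (show 0 < u k from hk).ne', one_mul]

lemma hId_eq (z z' : ℂ) {a : ℕ} {ξ : ℝ} (ha : a ≠ 0) (hξ : ξ < 1) :
    hId z z' a ξ = (z * z').re ^ (1 / 4 : ℝ) * ξ ^ (((a : ℝ) + 1 / 2) / 2) *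
      ((1 - ξ) * a) ^ ((z + z').re / 2) /
      √((a : ℝ) ^ (z + z').re * (a ! : ℝ) ^ 2 /
        (∏ i ∈ range a, ((z + 1 + i) * (z' + 1 + i))).re) := by
  have ha' : (0 : ℝ) < a := Nat.cast_pos.2 (Nat.pos_of_ne_zero ha)
  have hfac : (0 : ℝ) < a ! := Nat.cast_pos.2 a.factorial_pos
  have hsqrt : √((a : ℝ) ^ (z + z').re * (a ! : ℝ) ^ 2) = (a : ℝ) ^ ((z + z').re / 2) * a ! := by
    rw [Real.sqrt_mul (by positivity), Real.sqrt_sq hfac.le, Real.sqrt_eq_rpow,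
      ← Real.rpow_mul ha'.le, div_eq_mul_one_div (z + z').re]
  have hGamma : Real.Gamma ((a : ℝ) + 1 / 2 + 1 / 2) = a ! := by
    rw [add_assoc, add_halves, Real.Gamma_nat_eq_factorial]
  rw [hId, hGamma, Real.sqrt_div (by positivity), hsqrt,
    Real.mul_rpow (by linarith) ha'.le]
  field_simp

theorem tendsto_hId {z z' : ℂ} (hpos : ∀ k : ℤ, 0 < (z + k) * (z' + k)) {x : ℝ} (hx : 0 < x)
    {ξ : ℕ → ℝ} {a : ℕ → ℕ} (hξ01 : ∀ k, ξ k ∈ Set.Ioo (0 : ℝ) 1) (hξ : Tendsto ξ atTop (𝓝 1))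
    (hax : Tendsto (fun k => (1 - ξ k) * ((a k : ℝ) + 1 / 2)) atTop (𝓝 x)) :
    Tendsto (fun k => hId z z' (a k) (ξ k)) atTop (𝓝 (hIc z z' x)) := by
  have hgap : Tendsto (fun k => 1 - ξ k) atTop (𝓝[>] 0) :=
    tendsto_nhdsWithin_of_tendsto_nhds_of_eventually_within _
      (by simpa using (tendsto_const_nhds (x := (1 : ℝ))).sub hξ)
      (.of_forall fun k => sub_pos.2 (hξ01 k).2)
  have ha : Tendsto a atTop atTop := by
    refine tendsto_natCast_atTop_iff (R := ℝ) |>.1 ?_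
    have hshifted := tendsto_atTop_of_tendsto_mul hx hgap hax
    exact (tendsto_atTop_add_const_right _ (-(1 / 2)) hshifted).congr fun k => by ring
  have hpow : Tendsto (fun k => ξ k ^ (((a k : ℝ) + 1 / 2) / 2)) atTop
      (𝓝 (Real.exp (-x / 2))) := by
    rw [neg_div]
    exact Real.tendsto_rpow_of_tendsto_one_sub_mul (fun k => (hξ01 k).1) (fun k => by positivity)
      hξ (by simpa only [mul_div_assoc] using hax.div_const 2)
  have hscaled : Tendsto (fun k => ((1 - ξ k) * a k) ^ ((z + z').re / 2)) atTop
      (𝓝 (x ^ ((z + z').re / 2))) := by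
    refine (Real.continuousAt_rpow_const _ _ (.inl hx.ne')).tendsto.comp ?_
    simpa using (hax.sub ((tendsto_nhdsWithin_iff.1 hgap).1.div_const 2)).congr fun k => by ring
  have hGamma := ((tendsto_rpow_mul_factorial_sq_div_prod_re hpos).comp ha).sqrt
  have hlim := ((hpow.const_mul ((z * z').re ^ (1 / 4 : ℝ))).mul hscaled).div hGamma
    (Real.sqrt_pos.2 (pos_iff.1 (Gamma_mul_Gamma_pos hpos)).1).ne'
  rw [hIc, mul_right_comm _ _ (Real.exp _)]
  refine hlim.congr' ?_
  filter_upwards [ha.eventually_ne_atTop 0] with k hk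
  exact (hId_eq z z' hk (hξ01 k).2).symm

theorem statement17 (z z' : ℂ)
    (hpos : ∀ k : ℤ, 0 < ((z + (k : ℂ)) * (z' + (k : ℂ))).re ∧
      ((z + (k : ℂ)) * (z' + (k : ℂ))).im = 0) :
    (0 < (z * z').re ∧ (z * z').im = 0) ∧
    ((z + z').im = 0) ∧
    (0 < (Complex.Gamma (z + 1) * Complex.Gamma (z' + 1)).re ∧
      (Complex.Gamma (z + 1) * Complex.Gamma (z' + 1)).im = 0) ∧
    (∀ m : ℕ, 0 < (∏ i ∈ Finset.range m, ((z + 1 + (i : ℂ)) * (z' + 1 + (i : ℂ)))).re ∧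
      (∏ i ∈ Finset.range m, ((z + 1 + (i : ℂ)) * (z' + 1 + (i : ℂ)))).im = 0) ∧
    (∀ x : ℝ, 0 < x → ∀ (ξ : ℕ → ℝ) (a : ℕ → ℕ),
      (∀ k, ξ k ∈ Set.Ioo (0 : ℝ) 1) →
      Filter.Tendsto ξ Filter.atTop (nhds 1) →
      Filter.Tendsto (fun k => (1 - ξ k) * ((a k : ℝ) + 1/2)) Filter.atTop (nhds x) →
      Filter.Tendsto (fun k => hId z z' (a k) (ξ k)) Filter.atTop (nhds (hIc z z' x))) := by
  have hpos' (k : ℤ) : 0 < (z + k) * (z' + k) := pos_iff.2 ⟨(hpos k).1, (hpos k).2.symm⟩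
  have hreal {w : ℂ} (hw : 0 < w) : 0 < w.re ∧ w.im = 0 :=
    ⟨(pos_iff.1 hw).1, (pos_iff.1 hw).2.symm⟩
  exact ⟨by simpa using hpos 0,
    im_add_eq_zero_of_pos (by simpa using hpos' 0) (by simpa using hpos' 1),
    hreal (Gamma_mul_Gamma_pos hpos'), fun m => hreal (prod_add_one_mul_pos hpos' m),
    fun x hx ξ a hξ01 hξ hax => tendsto_hId hpos' hx hξ01 hξ hax⟩
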